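/- Let n ≥ 1, let A be an IFM of order n, let λ ∈ [0,1] and let p > 0 be a real number. Then for every m ≥ 1 and all i, j, the membership entry of the m-th power of A under the maxgeneralized mean–mingeneralized mean operation satisfies (A^m)μ i j = max over all m-paths P from i to j of wμ(P). -/

import Mathlib

open Filter Topology

/-- `A` (given by membership part `Amu` and non-membership part `Anu`) is an
intuitionistic fuzzy matrix. -/
def IsIFM (n : ℕ) (Amu Anu : Fin n → Fin n → ℝ) : Prop :=
  ∀ i j, 0 ≤ Amu i j ∧ 0 ≤ Anu i j ∧ Amu i j + Anu i j ≤ 1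

/-- Powers of an IFM under the maxgeneralized mean–mingeneralized mean operation
with parameters `lam` and exponent `p`:
`A^1 = A` and `A^(k+1) = A^k ∘ A`, where
`(X ∘ A)μ i j = max_t (lam·(Xμ i t)^p + (1-lam)·(Aμ t j)^p)^(1/p)` and
`(X ∘ A)ν i j = min_t (lam·(Xν i t)^p + (1-lam)·(Aν t j)^p)^(1/p)`.
(The value at `0` is irrelevant; it is set to `A`.) -/
noncomputable def gmPow (n : ℕ) (lam p : ℝ) (Amu Anu : Fin n → Fin n → ℝ) :
    ℕ → (Fin n → Fin n → ℝ) × (Fin n → Fin n → ℝ)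
  | 0 => (Amu, Anu)
  | 1 => (Amu, Anu)
  | m + 1 + 1 =>
    let X := gmPow n lam p Amu Anu (m + 1)
    (fun i j => ⨆ t : Fin n, (lam * X.1 i t ^ p + (1 - lam) * Amu t j ^ p) ^ (1 / p),
     fun i j => ⨅ t : Fin n, (lam * X.2 i t ^ p + (1 - lam) * Anu t j ^ p) ^ (1 / p))

/-- The coefficient of the `k`-th edge in the weight of an `m`-path:
`lam^(m-1)` for the first edge and `lam^(m-1-k)·(1-lam)` afterwards. -/
noncomputable def gmCoef (lam : ℝ) (m k : ℕ) : ℝ :=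
  if k = 0 then lam ^ (m - 1) else lam ^ (m - 1 - k) * (1 - lam)

/-- Weight of an `m`-path `P` with respect to the entry matrix `B`
(`B = Aμ` gives `wμ(P)`, `B = Aν` gives `wν(P)`). -/
noncomputable def gmWeight (n m : ℕ) (lam p : ℝ) (B : Fin n → Fin n → ℝ)
    (P : Fin (m + 1) → Fin n) : ℝ :=
  (∑ k : Fin m, gmCoef lam m (k : ℕ) * B (P k.castSucc) (P k.succ) ^ p) ^ (1 / p)

/-!
Extending an `m`-path from `i` to `t` by the edge `t → j` multiplies the coefficients of its
old edges by `lam` and gives the new edge the coefficient `1 - lam`, so the weight of the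
extended path is the generalized mean `(lam·w^p + (1-lam)·A(t,j)^p)^(1/p)` of the old weight `w` and `A(t,j)`.
Every `(m+1)`-path from `i` to `j` arises this way exactly once, and the mean is monotone in `w`;
so maximizing first over the `m`-paths to `t`, which gives `(A^m)μ i t` by induction, and then
over `t` is exactly the recursion defining `(A^(m+1))μ i j`.
-/

theorem MonotoneOn.map_ciSup_of_finite {α β ι : Type*} [ConditionallyCompleteLinearOrder α]
    [ConditionallyCompleteLattice β] [Finite ι] [Nonempty ι] {g : α → β} {s : Set α}
    (hg : MonotoneOn g s) {f : ι → α} (hf : ∀ i, f i ∈ s) :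
    g (⨆ i, f i) = ⨆ i, g (f i) := by
  obtain ⟨a, ha⟩ := exists_eq_ciSup_of_finite (f := f)
  rw [← ha]
  refine le_antisymm (le_ciSup (f := fun i => g (f i)) (Set.finite_range _).bddAbove a)
    (ciSup_le fun i => ?_)
  exact hg (hf i) (hf a) (ha ▸ le_ciSup (Set.finite_range f).bddAbove i)

theorem ciSup_sigma_of_finite {α ι : Type*} {κ : ι → Type*} [ConditionallyCompleteLattice α]
    [Finite ι] [Nonempty ι] [∀ i, Finite (κ i)] [∀ i, Nonempty (κ i)]
    (f : (Σ i, κ i) → α) : ⨆ x, f x = ⨆ i, ⨆ k, f ⟨i, k⟩ := by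
  have : Nonempty (Σ i, κ i) := ⟨⟨Classical.arbitrary ι, Classical.arbitrary _⟩⟩
  have hf : BddAbove (Set.range f) := (Set.finite_range f).bddAbove
  refine le_antisymm (ciSup_le fun x => ?_) (ciSup_le fun i => ciSup_le fun k => le_ciSup hf _)
  exact le_ciSup_of_le (Set.finite_range _).bddAbove x.1
    (le_ciSup (f := fun k => f ⟨x.1, k⟩) (Set.finite_range _).bddAbove x.2)

noncomputable def genMean (lam p x y : ℝ) : ℝ :=
  (lam * x ^ p + (1 - lam) * y ^ p) ^ (1 / p)

theorem monotoneOn_genMean {lam p y : ℝ} (h0 : 0 ≤ lam) (h1 : lam ≤ 1) (hp : 0 ≤ p)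
    (hy : 0 ≤ y) : MonotoneOn (genMean lam p · y) (Set.Ici 0) := by
  intro x hx x' _ hxx'
  have hxp : x ^ p ≤ x' ^ p := Real.rpow_le_rpow hx hxx' hp
  have hyp : 0 ≤ (1 - lam) * y ^ p := mul_nonneg (by linarith) (Real.rpow_nonneg hy p)
  refine Real.rpow_le_rpow ?_ (by gcongr) (by positivity)
  exact add_nonneg (mul_nonneg h0 (Real.rpow_nonneg hx p)) hyp

section Coef

variable {lam : ℝ}

theorem gmCoef_nonneg (h0 : 0 ≤ lam) (h1 : lam ≤ 1) (m k : ℕ) : 0 ≤ gmCoef lam m k := by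
  unfold gmCoef
  split
  · positivity
  · exact mul_nonneg (pow_nonneg h0 _) (by linarith)

theorem gmCoef_succ_of_lt {m k : ℕ} (hm : 1 ≤ m) (hk : k < m) :
    gmCoef lam (m + 1) k = lam * gmCoef lam m k := by
  unfold gmCoef
  split
  · rw [show m + 1 - 1 = m - 1 + 1 by omega, pow_succ']
  · rw [show m + 1 - 1 - k = m - 1 - k + 1 by omega, pow_succ', mul_assoc]

theorem gmCoef_succ_self {m : ℕ} (hm : 1 ≤ m) : gmCoef lam (m + 1) m = 1 - lam := by
  rw [gmCoef, if_neg (by omega), Nat.add_sub_cancel, Nat.sub_self, pow_zero, one_mul]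

end Coef

section Weight

variable {n m : ℕ} {lam p : ℝ} {B : Fin n → Fin n → ℝ}

theorem sum_gmCoef_mul_rpow_nonneg (h0 : 0 ≤ lam) (h1 : lam ≤ 1) (hB : ∀ a b, 0 ≤ B a b)
    (P : Fin (m + 1) → Fin n) :
    0 ≤ ∑ k : Fin m, gmCoef lam m k * B (P k.castSucc) (P k.succ) ^ p :=
  Finset.sum_nonneg fun k _ => mul_nonneg (gmCoef_nonneg h0 h1 m k) (Real.rpow_nonneg (hB _ _) p)

theorem gmWeight_nonneg (h0 : 0 ≤ lam) (h1 : lam ≤ 1) (hB : ∀ a b, 0 ≤ B a b)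
    (P : Fin (m + 1) → Fin n) : 0 ≤ gmWeight n m lam p B P :=
  Real.rpow_nonneg (sum_gmCoef_mul_rpow_nonneg h0 h1 hB P) _

theorem gmWeight_rpow (h0 : 0 ≤ lam) (h1 : lam ≤ 1) (hp : p ≠ 0) (hB : ∀ a b, 0 ≤ B a b)
    (P : Fin (m + 1) → Fin n) :
    gmWeight n m lam p B P ^ p =
      ∑ k : Fin m, gmCoef lam m k * B (P k.castSucc) (P k.succ) ^ p := by
  rw [gmWeight, ← Real.rpow_mul (sum_gmCoef_mul_rpow_nonneg h0 h1 hB P), one_div_mul_cancel hp,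
    Real.rpow_one]

theorem gmWeight_one (hp : p ≠ 0) (hB : ∀ a b, 0 ≤ B a b) (P : Fin 2 → Fin n) :
    gmWeight n 1 lam p B P = B (P 0) (P 1) := by
  simp only [gmWeight, Fin.sum_univ_one, gmCoef, Fin.val_zero, if_true, Nat.sub_self, pow_zero,
    one_mul]
  rw [← Real.rpow_mul (hB _ _), mul_one_div_cancel hp, Real.rpow_one]
  rfl

theorem gmWeight_snoc (hm : 1 ≤ m) (h0 : 0 ≤ lam) (h1 : lam ≤ 1) (hp : p ≠ 0)
    (hB : ∀ a b, 0 ≤ B a b) (P : Fin (m + 1) → Fin n) (j : Fin n) :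
    gmWeight n (m + 1) lam p B (Fin.snoc P j) =
      genMean lam p (gmWeight n m lam p B P) (B (P (Fin.last m)) j) := by
  rw [genMean, gmWeight_rpow h0 h1 hp hB, Finset.mul_sum, gmWeight, Fin.sum_univ_castSucc]
  congr 2
  · refine Finset.sum_congr rfl fun k _ => ?_
    rw [Fin.succ_castSucc, Fin.snoc_castSucc, Fin.snoc_castSucc, Fin.val_castSucc,
      gmCoef_succ_of_lt hm k.isLt, mul_assoc]
  · rw [Fin.val_last, Fin.succ_last, Fin.snoc_last, Fin.snoc_castSucc, gmCoef_succ_self hm]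

end Weight

section Paths

abbrev FinPath (n m : ℕ) (i j : Fin n) : Type :=
  {P : Fin (m + 1) → Fin n // P 0 = i ∧ P (Fin.last m) = j}

variable {n m : ℕ} {i j : Fin n}

instance : Nonempty (FinPath n (m + 1) i j) :=
  ⟨⟨Fin.cons i fun _ => j, Fin.cons_zero _ _, by rw [← Fin.succ_last, Fin.cons_succ]⟩⟩

def FinPath.snocEquiv : FinPath n (m + 1) i j ≃ Σ t, FinPath n m i t where
  toFun Q := ⟨Q.1 (Fin.last m).castSucc, Fin.init Q.1, Q.2.1, rfl⟩
  invFun x := ⟨Fin.snoc x.2.1 j, (Fin.snoc_castSucc (i := 0) ..).trans x.2.2.1,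
    Fin.snoc_last _ _⟩
  left_inv Q := Subtype.ext <| by
    conv_rhs => rw [← Fin.snoc_init_self Q.1, Q.2.2]
  right_inv x :=
    Sigma.subtype_ext (by simp [← x.2.2.2]) (Fin.init_snoc (α := fun _ => Fin n) j x.2.1)

end Paths

theorem gmPow_mu_eq_sup_weight (n : ℕ) (Amu Anu : Fin n → Fin n → ℝ)
    (hA : IsIFM n Amu Anu) (lam p : ℝ) (hlam : lam ∈ Set.Icc (0 : ℝ) 1) (hp : 0 < p)
    (m : ℕ) (hm : 1 ≤ m) (i j : Fin n) :
    (gmPow n lam p Amu Anu m).1 i j =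
      ⨆ P : {P : Fin (m + 1) → Fin n // P 0 = i ∧ P (Fin.last m) = j},
        gmWeight n m lam p Amu P.1 := by
  obtain ⟨h0, h1⟩ := hlam
  have hB : ∀ a b, 0 ≤ Amu a b := fun a b => (hA a b).1
  obtain ⟨m, rfl⟩ : ∃ m', m = m' + 1 := ⟨m - 1, by omega⟩
  clear hm
  induction m generalizing i j with
  | zero =>
    calc (gmPow n lam p Amu Anu 1).1 i j = ⨆ _ : FinPath n 1 i j, Amu i j := ciSup_const.symm
      _ = _ := iSup_congr fun P => by
        rw [gmWeight_one hp.ne' hB, P.2.1]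
        exact congrArg (Amu i) P.2.2.symm
  | succ m ih =>
    have : Nonempty (Fin n) := ⟨i⟩
    calc (gmPow n lam p Amu Anu (m + 1 + 1)).1 i j
        = ⨆ t, genMean lam p ((gmPow n lam p Amu Anu (m + 1)).1 i t) (Amu t j) := rfl
      _ = ⨆ t, ⨆ P : FinPath n (m + 1) i t, genMean lam p (gmWeight n (m + 1) lam p Amu P.1)
            (Amu t j) := by
        refine iSup_congr fun t => ?_
        rw [ih i t]
        exact (monotoneOn_genMean h0 h1 hp.le (hB t j)).map_ciSup_of_finite
          fun P => gmWeight_nonneg h0 h1 hB P.1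
      _ = ⨆ x : Σ t, FinPath n (m + 1) i t, gmWeight n (m + 1 + 1) lam p Amu
            (Fin.snoc x.2.1 j) := by
        rw [ciSup_sigma_of_finite]
        refine iSup_congr fun t => iSup_congr fun P => ?_
        rw [gmWeight_snoc (by omega) h0 h1 hp.ne' hB, P.2.2]
      _ = ⨆ Q : FinPath n (m + 1 + 1) i j, gmWeight n (m + 1 + 1) lam p Amu Q.1 :=
        FinPath.snocEquiv.symm.iSup_comp
          (g := fun Q : FinPath n (m + 1 + 1) i j => gmWeight n (m + 1 + 1) lam p Amu Q.1)
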